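/- The rooted k-contraction of a finite pointed model M has the least number of worlds among all finite pointed models k-bisimilar to M. -/

import Mathlib

/-- A finite pointed Kripke model with modality indices `I` and atoms `P`. -/
structure PModel (I P : Type) where
  W : Type
  fin : Finite W
  R : I → W → W → Prop
  V : P → W → Prop
  d : W

variable {I P : Type}

/-- `h`-bisimilarity between worlds of two models (back-and-forth to depth `h`). -/
def Bisim (M N : PModel I P) : ℕ → M.W → N.W → Prop
  | 0, w, v => ∀ p, M.V p w ↔ N.V p v
  | h+1, w, v => (∀ p, M.V p w ↔ N.V p v)
      ∧ (∀ i w', M.R i w w' → ∃ v', N.R i v v' ∧ Bisim M N h w' v')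
      ∧ (∀ i v', N.R i v v' → ∃ w', M.R i w w' ∧ Bisim M N h w' v')

/-- `k`-bisimilarity of pointed models. -/
def PBisim (k : ℕ) (M N : PModel I P) : Prop := Bisim M N k M.d N.d

/-- Directed paths of length `n`. -/
def Steps (M : PModel I P) : ℕ → M.W → M.W → Prop
  | 0, w, v => w = v
  | n+1, w, v => ∃ u i, M.R i w u ∧ Steps M n u v

/-- Depth of a world: length of a shortest path from the designated world (`⊤` if none). -/
noncomputable def depth (M : PModel I P) (w : M.W) : ℕ∞ :=
  sInf {n : ℕ∞ | ∃ m : ℕ, n = (m : ℕ∞) ∧ Steps M m M.d w}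

/-- Bound `b(w) = k − d(w)`, with `⊥` for unreachable worlds. -/
noncomputable def bound (k : ℕ) (M : PModel I P) (w : M.W) : WithBot ℤ :=
  ENat.recTopCoe (⊥ : WithBot ℤ) (fun n : ℕ => (((k : ℤ) - n : ℤ) : WithBot ℤ)) (depth M w)

/-- The bound as a natural number (meaningful when `0 ≤ bound k M w`). -/
noncomputable def nbound (k : ℕ) (M : PModel I P) (w : M.W) : ℕ :=
  k - (depth M w).toNat
/-- `x` represents `y` : `b(x) ≥ b(y) ≥ 0` and `x ∼_{b(y)} y`. -/
noncomputable def Repr' (k : ℕ) (M : PModel I P) (x y : M.W) : Prop :=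
  0 ≤ bound k M y ∧ bound k M y ≤ bound k M x ∧ Bisim M M (nbound k M y) x y

/-- `x` strictly represents `y`. -/
noncomputable def SRepr (k : ℕ) (M : PModel I P) (x y : M.W) : Prop :=
  Repr' k M x y ∧ bound k M y < bound k M x

/-- Maximal representatives. -/
noncomputable def maxRepr (k : ℕ) (M : PModel I P) : Set M.W :=
  {x | 0 ≤ bound k M x ∧ ∀ y, ¬ SRepr k M y x}

/-- Representative class `[x]_{b(x)}`. -/
noncomputable def reprClass (k : ℕ) (M : PModel I P) (x : M.W) : Set M.W :=
  {y | Bisim M M (nbound k M x) x y}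

lemma depth_d (M : PModel I P) : depth M M.d = 0 := by
  have h0 : (0 : ℕ∞) ∈ {n : ℕ∞ | ∃ m : ℕ, n = (m : ℕ∞) ∧ Steps M m M.d M.d} :=
    ⟨0, by simp, rfl⟩
  have := sInf_le h0
  simpa [depth, le_zero_iff] using this

lemma bound_d (k : ℕ) (M : PModel I P) : bound k M M.d = ((k : ℤ) : WithBot ℤ) := by
  have h := depth_d M
  simp only [bound, h, ENat.recTopCoe_zero]
  norm_num

lemma bound_le (k : ℕ) (M : PModel I P) (w : M.W) : bound k M w ≤ ((k : ℤ) : WithBot ℤ) := by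
  simp only [bound]
  by_cases hd : depth M w = ⊤
  · simp [hd]
  · lift depth M w to ℕ using hd with n hn
    simp only [ENat.recTopCoe_coe]
    exact_mod_cast (by omega : (k : ℤ) - n ≤ (k:ℤ))

lemma d_mem_maxRepr (k : ℕ) (M : PModel I P) : M.d ∈ maxRepr k M := by
  constructor
  · rw [bound_d]; exact_mod_cast Int.ofNat_nonneg k
  · rintro y ⟨_, hlt⟩
    exact absurd (lt_of_lt_of_le hlt (bound_le k M y)) (by rw [bound_d]; exact lt_irrefl _)

/-- Carrier of the rooted k-contraction: representative classes of maximal representatives. -/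
def ContrW (k : ℕ) (M : PModel I P) : Type :=
  {S : Set M.W // ∃ x ∈ maxRepr k M, S = reprClass k M x}

instance (k : ℕ) (M : PModel I P) : Finite (ContrW k M) := by
  have := M.fin
  exact Subtype.finite

/-- The rooted `k`-contraction. -/
noncomputable def rootedContraction (k : ℕ) (M : PModel I P) : PModel I P where
  W := ContrW k M
  fin := inferInstance
  R := fun i S T => ∃ x ∈ maxRepr k M, ∃ y ∈ maxRepr k M,
        S.1 = reprClass k M x ∧ T.1 = reprClass k M y ∧
        0 < bound k M x ∧ ∃ z, M.R i x z ∧ Bisim M M (nbound k M x - 1) y z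
  V := fun p S => ∃ x ∈ maxRepr k M, S.1 = reprClass k M x ∧ M.V p x
  d := ⟨reprClass k M M.d, M.d, d_mem_maxRepr k M, rfl⟩

/-! Each maximal representative `x` lies at depth `n ≤ k`, so transporting a shortest path
from the root along the `k`-bisimulation yields a world of `N` that is `b(x)`-bisimilar to `x`.
Two maximal representatives sent to the same world of `N` are `b`-bisimilar to each other at
the smaller of their bounds; maximality forces the bounds to agree, and then their classes
coincide. Hence choosing such a world for every class is injective. -/

namespace Bisim

variable {M N O : PModel I P}

theorem atoms {h : ℕ} {w : M.W} {v : N.W} (hb : Bisim M N h w v) (p : P) :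
    M.V p w ↔ N.V p v := by
  cases h with
  | zero => exact hb p
  | succ h => exact hb.1 p

theorem mono {h h' : ℕ} {w : M.W} {v : N.W} (hb : Bisim M N h w v) (hle : h' ≤ h) :
    Bisim M N h' w v := by
  induction h' generalizing h w v with
  | zero => exact hb.atoms
  | succ h' ih =>
    obtain ⟨h, rfl⟩ : ∃ n, h = n + 1 := ⟨h - 1, by omega⟩
    obtain ⟨hatoms, hforth, hback⟩ := hb
    refine ⟨hatoms, fun i w' hw' => ?_, fun i v' hv' => ?_⟩
    · obtain ⟨v', hv', hb'⟩ := hforth i w' hw'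
      exact ⟨v', hv', ih hb' (by omega)⟩
    · obtain ⟨w', hw', hb'⟩ := hback i v' hv'
      exact ⟨w', hw', ih hb' (by omega)⟩

theorem symm {h : ℕ} {w : M.W} {v : N.W} (hb : Bisim M N h w v) : Bisim N M h v w := by
  induction h generalizing w v with
  | zero => exact fun p => (hb p).symm
  | succ h ih =>
    obtain ⟨hatoms, hforth, hback⟩ := hb
    refine ⟨fun p => (hatoms p).symm, fun i v' hv' => ?_, fun i w' hw' => ?_⟩
    · obtain ⟨w', hw', hb'⟩ := hback i v' hv'
      exact ⟨w', hw', ih hb'⟩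
    · obtain ⟨v', hv', hb'⟩ := hforth i w' hw'
      exact ⟨v', hv', ih hb'⟩

theorem trans {h : ℕ} {w : M.W} {v : N.W} {u : O.W} (hwv : Bisim M N h w v)
    (hvu : Bisim N O h v u) : Bisim M O h w u := by
  induction h generalizing w v u with
  | zero => exact fun p => (hwv p).trans (hvu p)
  | succ h ih =>
    obtain ⟨hatoms₁, hforth₁, hback₁⟩ := hwv
    obtain ⟨hatoms₂, hforth₂, hback₂⟩ := hvu
    refine ⟨fun p => (hatoms₁ p).trans (hatoms₂ p), fun i w' hw' => ?_, fun i u' hu' => ?_⟩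
    · obtain ⟨v', hv', hwv'⟩ := hforth₁ i w' hw'
      obtain ⟨u', hu', hvu'⟩ := hforth₂ i v' hv'
      exact ⟨u', hu', ih hwv' hvu'⟩
    · obtain ⟨v', hv', hvu'⟩ := hback₂ i u' hu'
      obtain ⟨w', hw', hwv'⟩ := hback₁ i v' hv'
      exact ⟨w', hw', ih hwv' hvu'⟩

theorem exists_of_steps {m h : ℕ} {w w' : M.W} {v : N.W} (hs : Steps M m w w')
    (hb : Bisim M N (h + m) w v) : ∃ v', Bisim M N h w' v' := by
  induction m generalizing w v with
  | zero => exact ⟨v, hs ▸ hb⟩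
  | succ m ih =>
    obtain ⟨u, i, hwu, hs⟩ := hs
    obtain ⟨v', _, hb'⟩ := hb.2.1 i u hwu
    exact ih hs hb'

end Bisim

section Depth

variable {k : ℕ} {M : PModel I P} {w : M.W}

theorem steps_depth_toNat (h : depth M w ≠ ⊤) : Steps M (depth M w).toNat M.d w := by
  have hne : {n : ℕ∞ | ∃ m : ℕ, n = (m : ℕ∞) ∧ Steps M m M.d w}.Nonempty := by
    by_contra hempty
    exact h (by rw [depth, Set.not_nonempty_iff_eq_empty.mp hempty, sInf_empty])
  obtain ⟨m, hm, hs⟩ := csInf_mem hne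
  rwa [depth, hm, ENat.toNat_natCast]

theorem depth_ne_top_of_bound_nonneg (h : 0 ≤ bound k M w) : depth M w ≠ ⊤ := by
  intro hd
  simp [bound, hd] at h

theorem bound_eq_natCast_of_bound_nonneg (h : 0 ≤ bound k M w) :
    bound k M w = (((k : ℤ) - (depth M w).toNat : ℤ) : WithBot ℤ) := by
  conv_lhs => rw [bound, ← ENat.natCast_toNat (depth_ne_top_of_bound_nonneg h)]
  rfl

theorem toNat_depth_le_of_bound_nonneg (h : 0 ≤ bound k M w) : (depth M w).toNat ≤ k := by
  have h' : (0 : ℤ) ≤ k - (depth M w).toNat := by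
    exact_mod_cast bound_eq_natCast_of_bound_nonneg h ▸ h
  omega

theorem bound_eq_nbound (h : 0 ≤ bound k M w) :
    bound k M w = ((nbound k M w : ℤ) : WithBot ℤ) := by
  rw [bound_eq_natCast_of_bound_nonneg h, nbound, Nat.cast_sub (toNat_depth_le_of_bound_nonneg h)]

theorem exists_bisim_of_bound_nonneg {N : PModel I P} (hN : PBisim k M N)
    (h : 0 ≤ bound k M w) : ∃ v, Bisim M N (nbound k M w) w v := by
  have hk : nbound k M w + (depth M w).toNat = k := by
    have := toNat_depth_le_of_bound_nonneg h
    rw [nbound]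
    omega
  exact Bisim.exists_of_steps (steps_depth_toNat (depth_ne_top_of_bound_nonneg h)) (hk ▸ hN)

end Depth

section Representatives

variable {k : ℕ} {M N : PModel I P} {x y : M.W}

theorem reprClass_eq (hxy : Bisim M M (nbound k M x) x y) (hb : nbound k M x = nbound k M y) :
    reprClass k M x = reprClass k M y := by
  ext z
  change Bisim M M _ x z ↔ Bisim M M _ y z
  rw [← hb]
  exact ⟨hxy.symm.trans, hxy.trans⟩

theorem nbound_eq_of_repr (hy : y ∈ maxRepr k M) (hxy : Repr' k M x y) :
    nbound k M x = nbound k M y := by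
  have hb : bound k M y = bound k M x :=
    le_antisymm hxy.2.1 (not_lt.mp fun hlt => hy.2 x ⟨hxy, hlt⟩)
  rw [bound_eq_nbound (hy.1.trans hxy.2.1), bound_eq_nbound hy.1] at hb
  exact_mod_cast hb.symm

theorem reprClass_eq_of_bisim_of_nbound_le (hx : 0 ≤ bound k M x) (hy : y ∈ maxRepr k M)
    {v : N.W} (hxv : Bisim M N (nbound k M x) x v) (hyv : Bisim M N (nbound k M y) y v)
    (hle : nbound k M y ≤ nbound k M x) : reprClass k M x = reprClass k M y := by
  have hxy : Bisim M M (nbound k M y) x y := (hxv.mono hle).trans hyv.symm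
  have hbound : bound k M y ≤ bound k M x := by
    rw [bound_eq_nbound hx, bound_eq_nbound hy.1]
    exact_mod_cast hle
  have hb := nbound_eq_of_repr hy ⟨hy.1, hbound, hxy⟩
  exact reprClass_eq (hb ▸ hxy) hb

theorem reprClass_eq_of_bisim (hx : x ∈ maxRepr k M) (hy : y ∈ maxRepr k M)
    {v : N.W} (hxv : Bisim M N (nbound k M x) x v) (hyv : Bisim M N (nbound k M y) y v) :
    reprClass k M x = reprClass k M y := by
  rcases le_total (nbound k M y) (nbound k M x) with hle | hle
  · exact reprClass_eq_of_bisim_of_nbound_le hx.1 hy hxv hyv hle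
  · exact (reprClass_eq_of_bisim_of_nbound_le hy.1 hx hyv hxv hle).symm

end Representatives

/-- World minimality: the rooted `k`-contraction has the least number of worlds among
all pointed models `k`-bisimilar to `M`. -/
theorem rootedContraction_world_minimal (k : ℕ) (M : PModel I P)
    (N : PModel I P) (hN : PBisim k M N) :
    Nat.card (rootedContraction k M).W ≤ Nat.card N.W := by
  have := N.fin
  have hwitness : ∀ S : ContrW k M, ∃ x ∈ maxRepr k M, S.1 = reprClass k M x ∧
      ∃ v : N.W, Bisim M N (nbound k M x) x v := by
    rintro ⟨_, x, hx, rfl⟩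
    exact ⟨x, hx, rfl, exists_bisim_of_bound_nonneg hN hx.1⟩
  choose x hx hSx v hv using hwitness
  refine Nat.card_le_card_of_injective v fun S T hST => Subtype.ext ?_
  rw [hSx S, hSx T, reprClass_eq_of_bisim (hx S) (hx T) (hv S) (hST ▸ hv T)]
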